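/- Let p ∈ Δ_N be a probability vector, l ∈ ℝ^N a nonnegative loss vector with ‖l‖_∞ ≤ G, and η > 0. Then (1/η)·ln(∑_i p_i·e^{-η·l_i}) ≤ -⟨p, l⟩ + (η/2)·∑_i p_i·l_i², and moreover (η/2)·∑_i p_i·l_i² ≤ (ηG/2)·⟨p, l⟩. -/

import Mathlib

/-!
Apply `exp (-y) ≤ 1 - y + y² / 2` (for `y ≥ 0`) to `y = η lᵢ` and average against `p`; then
`log S ≤ S - 1` turns the bound on `S = ∑ pᵢ e^{-η lᵢ}` into the first claim. The second claim
is `lᵢ² ≤ G lᵢ`, averaged against `p`.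
-/

open Finset Real

theorem Real.exp_neg_le_one_sub_add_sq_div_two {y : ℝ} (hy : 0 ≤ y) :
    exp (-y) ≤ 1 - y + y ^ 2 / 2 := by
  have hcubic : 1 + y + y ^ 2 / 2 + y ^ 3 / 6 ≤ exp y := by
    simpa [sum_range_succ, Nat.factorial] using sum_le_exp_of_nonneg hy 4
  have hq : 0 < 1 - y + y ^ 2 / 2 := by nlinarith [sq_nonneg (y - 1)]
  -- `(1 - y + y² / 2) (1 + y + y² / 2 + y³ / 6) = 1 + y³ / 6 + y⁴ / 12 + y⁵ / 12`
  have hprod : 1 ≤ (1 - y + y ^ 2 / 2) * exp y := by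
    nlinarith [mul_le_mul_of_nonneg_left hcubic hq.le, pow_nonneg hy 3, pow_nonneg hy 4,
      pow_nonneg hy 5]
  rw [exp_neg, inv_le_iff_one_le_mul₀ (exp_pos y)]
  linarith

section WeightedSums

variable {ι : Type*} {s : Finset ι} {p x : ι → ℝ}

theorem log_sum_mul_exp_neg_le (hp : ∀ i ∈ s, 0 ≤ p i) (hps : ∑ i ∈ s, p i = 1)
    (hx : ∀ i ∈ s, 0 ≤ x i) :
    log (∑ i ∈ s, p i * exp (-x i)) ≤ -∑ i ∈ s, p i * x i + (∑ i ∈ s, p i * x i ^ 2) / 2 := by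
  obtain ⟨j, hj, hpj⟩ : ∃ j ∈ s, 0 < p j :=
    exists_lt_of_sum_lt (by simp [hps] : ∑ i ∈ s, (0 : ℝ) < ∑ i ∈ s, p i)
  have hpos : 0 < ∑ i ∈ s, p i * exp (-x i) :=
    sum_pos' (fun i hi => mul_nonneg (hp i hi) (exp_pos _).le)
      ⟨j, hj, mul_pos hpj (exp_pos _)⟩
  calc log (∑ i ∈ s, p i * exp (-x i))
      ≤ ∑ i ∈ s, p i * exp (-x i) - 1 := log_le_sub_one_of_pos hpos
    _ ≤ ∑ i ∈ s, p i * (1 - x i + x i ^ 2 / 2) - 1 := by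
      gcongr with i hi
      · exact hp i hi
      · exact exp_neg_le_one_sub_add_sq_div_two (hx i hi)
    _ = -∑ i ∈ s, p i * x i + (∑ i ∈ s, p i * x i ^ 2) / 2 := by
      simp only [mul_add, mul_sub, mul_one, sum_add_distrib, sum_sub_distrib, hps, sum_div,
        mul_div_assoc]
      ring

theorem sum_mul_sq_le_mul_sum_mul {G : ℝ} (hp : ∀ i ∈ s, 0 ≤ p i) (hx : ∀ i ∈ s, 0 ≤ x i)
    (hxG : ∀ i ∈ s, x i ≤ G) :
    ∑ i ∈ s, p i * x i ^ 2 ≤ G * ∑ i ∈ s, p i * x i := by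
  rw [mul_sum]
  refine sum_le_sum fun i hi => ?_
  linarith [mul_le_mul_of_nonneg_left (hxG i hi) (mul_nonneg (hp i hi) (hx i hi))]

end WeightedSums

theorem hedge_potential_step {N : ℕ} (p l : Fin N → ℝ)
    (hp : ∀ i, 0 ≤ p i) (hpsum : ∑ i, p i = 1)
    (hl : ∀ i, 0 ≤ l i) (G : ℝ) (hlG : ∀ i, l i ≤ G)
    (η : ℝ) (hη : 0 < η) :
    (1 / η) * Real.log (∑ i, p i * Real.exp (-η * l i))
      ≤ -(∑ i, p i * l i) + (η / 2) * ∑ i, p i * l i ^ 2 ∧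
    (η / 2) * (∑ i, p i * l i ^ 2) ≤ (η * G / 2) * ∑ i, p i * l i := by
  have hlog := log_sum_mul_exp_neg_le (s := univ) (x := fun i => η * l i)
    (fun i _ => hp i) hpsum (fun i _ => mul_nonneg hη.le (hl i))
  have hlin : ∑ i, p i * (η * l i) = η * ∑ i, p i * l i := by
    rw [mul_sum]; exact sum_congr rfl fun i _ => by ring
  have hsq : ∑ i, p i * (η * l i) ^ 2 = η ^ 2 * ∑ i, p i * l i ^ 2 := by
    rw [mul_sum]; exact sum_congr rfl fun i _ => by ring
  simp only [hlin, hsq, ← neg_mul] at hlog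
  have hBA := sum_mul_sq_le_mul_sum_mul (s := univ) (fun i _ => hp i) (fun i _ => hl i)
    (fun i _ => hlG i)
  constructor
  · rw [one_div, inv_mul_le_iff₀ hη]
    linarith
  · linarith [mul_le_mul_of_nonneg_left hBA hη.le]
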